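/- Let ρ be a left-continuous convex modular on a real vector space X. Then: (1) if for every x₀ ∈ X_ρ and r > 0 the modular ball {y ∈ X_ρ : ρ(y − x₀) < r} is τ_ρ-open, then ρ is right-continuous (for every u ∈ X and λ₀ > 0, ρ(λu) → ρ(λ₀u) as λ → λ₀ from the right); (2) if ρ is right-continuous, then every modular ball {y ∈ X_ρ : ρ(y − x₀) < r} is open with respect to the Luxemburg norm ‖·‖_ρ; (3) if in addition ρ satisfies the Δ₂-property, then openness of every modular ball with respect to ‖·‖_ρ implies that every modular ball is τ_ρ-open. -/

import Mathlib

open Filter Topology ENNReal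

/-- A convex modular on a real vector space `X`. -/
structure IsConvexModular {X : Type*} [AddCommGroup X] [Module ℝ X] (ρ : X → ℝ≥0∞) : Prop where
  zero_iff : ∀ u : X, ρ u = 0 ↔ u = 0
  neg_eq : ∀ u : X, ρ (-u) = ρ u
  convex : ∀ α : ℝ, 0 ≤ α → α ≤ 1 → ∀ u v : X,
    ρ (α • u + (1 - α) • v) ≤ ENNReal.ofReal α * ρ u + ENNReal.ofReal (1 - α) * ρ v

/-- `X_ρ`, the modular vector space associated to `ρ`. -/
def modularSet {X : Type*} [AddCommGroup X] [Module ℝ X] (ρ : X → ℝ≥0∞) : Set X :=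
  {v : X | ∃ l : ℝ, 0 < l ∧ ρ (l • v) < ⊤}

/-- A set `A ⊆ X_ρ` is `τ_ρ`-open if every point of `A` contains a modular ball around it. -/
def IsTauRhoOpen {X : Type*} [AddCommGroup X] [Module ℝ X] (ρ : X → ℝ≥0∞) (A : Set X) : Prop :=
  A ⊆ modularSet ρ ∧
    ∀ x ∈ A, ∃ ε : ℝ, 0 < ε ∧ {y ∈ modularSet ρ | ρ (y - x) < ENNReal.ofReal ε} ⊆ A

/-- `ρ` is left-continuous. -/
def IsLeftContinuousModular {X : Type*} [AddCommGroup X] [Module ℝ X] (ρ : X → ℝ≥0∞) : Prop :=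
  ∀ (u : X) (l₀ : ℝ), 0 < l₀ →
    Tendsto (fun l : ℝ => ρ (l • u)) (nhdsWithin l₀ (Set.Iio l₀)) (nhds (ρ (l₀ • u)))

/-- The Luxemburg norm `‖x‖_ρ := inf {λ > 0 : ρ(x/λ) ≤ 1}`. -/
noncomputable def luxNorm {X : Type*} [AddCommGroup X] [Module ℝ X] (ρ : X → ℝ≥0∞) (x : X) : ℝ :=
  sInf {l : ℝ | 0 < l ∧ ρ (l⁻¹ • x) ≤ 1}

/-- The `Δ₂`-property of a modular. -/
def Delta2 {X : Type*} [AddCommGroup X] [Module ℝ X] (ρ : X → ℝ≥0∞) : Prop :=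
  ∀ x : ℕ → X, Tendsto (fun j => ρ (x j)) atTop (nhds 0) →
    Tendsto (fun j => ρ ((2 : ℝ) • x j)) atTop (nhds 0)

/-- `ρ` is right-continuous. -/
def IsRightContinuousModular {X : Type*} [AddCommGroup X] [Module ℝ X] (ρ : X → ℝ≥0∞) : Prop :=
  ∀ (u : X) (l₀ : ℝ), 0 < l₀ →
    Tendsto (fun l : ℝ => ρ (l • u)) (nhdsWithin l₀ (Set.Ioi l₀)) (nhds (ρ (l₀ • u)))

/-- The open modular ball of center `x₀ ∈ X_ρ` and radius `r`. -/
def modBall {X : Type*} [AddCommGroup X] [Module ℝ X] (ρ : X → ℝ≥0∞) (x₀ : X) (r : ℝ) :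
    Set X :=
  {y ∈ modularSet ρ | ρ (y - x₀) < ENNReal.ofReal r}

/-- A set `A ⊆ X_ρ` is open for the Luxemburg norm. -/
def IsLuxOpen {X : Type*} [AddCommGroup X] [Module ℝ X] (ρ : X → ℝ≥0∞) (A : Set X) : Prop :=
  ∀ x ∈ A, ∃ r : ℝ, 0 < r ∧ {y ∈ modularSet ρ | luxNorm ρ (y - x) < r} ⊆ A

/-!
Convexity together with `ρ 0 = 0` makes `t ↦ ρ (t • z)` nondecreasing on `[0, ∞)` and gives
`ρ (t • z) ≤ (t / s) ρ (s • z)` for `t ≤ s`, so `ρ (t • z) → 0` as `t → 0⁺` whenever `z ∈ X_ρ`.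

(1) If `ρ (l₀ • u) < c`, the ball `B(0, c)` contains a modular ball around `l₀ • u`, and
`ρ (l • u - l₀ • u) = ρ ((l - l₀) • u) → 0` as `l → l₀⁺`, so `ρ (l • u) < c` eventually.

(2) Given `ρ (x - x₀) < c < r`, right-continuity gives `μ > 1` with `ρ (μ • (x - x₀)) < c`. If
`ρ (l⁻¹ • (y - x)) ≤ 1` with `l < min (1 - μ⁻¹) (r - c)`, write
`y - x₀ = l • (l⁻¹ • (y - x)) + (1 - l) • ((1 - l)⁻¹ • (x - x₀))`; convexity bounds
`ρ (y - x₀)` by `l + ρ (μ • (x - x₀)) < l + c < r`.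

(3) By `Δ₂`, `ρ z → 0` forces `ρ (2 ^ k • z) → 0`; so a small modular ball around `x` has
`ρ (2 ^ k • (y - x)) ≤ 1`, i.e. `‖y - x‖_ρ ≤ 2⁻ᵏ`, which lies inside any given norm ball.
-/

theorem smul_mem_modularSet_iff {X : Type*} [AddCommGroup X] [Module ℝ X] {ρ : X → ℝ≥0∞}
    {u : X} {l : ℝ} (hl : 0 < l) : l • u ∈ modularSet ρ ↔ u ∈ modularSet ρ := by
  constructor
  · rintro ⟨m, hm, hfin⟩
    exact ⟨m * l, by positivity, by rwa [mul_smul]⟩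
  · rintro ⟨m, hm, hfin⟩
    exact ⟨m / l, by positivity, by rwa [smul_smul, div_mul_cancel₀ _ hl.ne']⟩

theorem luxNorm_le {X : Type*} [AddCommGroup X] [Module ℝ X] {ρ : X → ℝ≥0∞} {z : X} {l : ℝ}
    (hl : 0 < l) (h : ρ (l⁻¹ • z) ≤ 1) : luxNorm ρ z ≤ l :=
  csInf_le ⟨0, fun _ hm => hm.1.le⟩ ⟨hl, h⟩

theorem eventually_comap_nhds_zero_iff {α : Type*} {f : α → ℝ≥0∞} {p : α → Prop} :
    (∀ᶠ a in comap f (𝓝 0), p a) ↔ ∃ ε : ℝ, 0 < ε ∧ ∀ a, f a < ENNReal.ofReal ε → p a := by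
  rw [(ENNReal.nhds_zero_basis.comap f).eventually_iff]
  constructor
  · rintro ⟨η, hη, hp⟩
    obtain ⟨ε, -, hε, hεη⟩ := ENNReal.lt_iff_exists_real_btwn.1 hη
    exact ⟨ε, ENNReal.ofReal_pos.1 hε, fun a ha => hp (ha.trans hεη)⟩
  · rintro ⟨ε, hε, hp⟩
    exact ⟨ENNReal.ofReal ε, ENNReal.ofReal_pos.2 hε, fun a ha => hp a ha⟩

namespace IsConvexModular

variable {X : Type*} [AddCommGroup X] [Module ℝ X] {ρ : X → ℝ≥0∞}

theorem map_zero (hρ : IsConvexModular ρ) : ρ 0 = 0 := (hρ.zero_iff 0).2 rfl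

theorem zero_mem_modularSet (hρ : IsConvexModular ρ) : (0 : X) ∈ modularSet ρ :=
  ⟨1, one_pos, by simp [hρ.map_zero]⟩

theorem map_smul_le_div_mul (hρ : IsConvexModular ρ) (z : X) {t s : ℝ} (ht : 0 ≤ t)
    (hts : t ≤ s) : ρ (t • z) ≤ ENNReal.ofReal (t / s) * ρ (s • z) := by
  rcases ht.eq_or_lt with rfl | ht
  · simp [hρ.map_zero]
  have hs : 0 < s := ht.trans_le hts
  have h := hρ.convex (t / s) (by positivity) (div_le_one_of_le₀ hts hs.le) (s • z) 0
  rwa [smul_zero, add_zero, smul_smul, div_mul_cancel₀ _ hs.ne', hρ.map_zero, mul_zero,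
    add_zero] at h

theorem monotoneOn_smul (hρ : IsConvexModular ρ) (z : X) :
    MonotoneOn (fun t : ℝ => ρ (t • z)) (Set.Ici 0) := fun _ ht _ _ hts =>
  (hρ.map_smul_le_div_mul z ht hts).trans <| mul_le_of_le_one_left (zero_le) <|
    ENNReal.ofReal_le_one.2 (div_le_one_of_le₀ hts (le_trans ht hts))

theorem tendsto_smul_nhdsGT_zero (hρ : IsConvexModular ρ) {z : X} (hz : z ∈ modularSet ρ) :
    Tendsto (fun t : ℝ => ρ (t • z)) (𝓝[>] 0) (𝓝 0) := by
  obtain ⟨s, hs, hfin⟩ := hz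
  have hbound : Tendsto (fun t : ℝ => ENNReal.ofReal (t / s) * ρ (s • z)) (𝓝[>] 0) (𝓝 0) := by
    have h := ENNReal.Tendsto.mul_const (ENNReal.tendsto_ofReal
      ((continuous_id.div_const s).tendsto 0)) (Or.inr hfin.ne)
    simpa using h.mono_left nhdsWithin_le_nhds
  refine tendsto_of_tendsto_of_tendsto_of_le_of_le' tendsto_const_nhds hbound
    (Eventually.of_forall fun _ => zero_le) ?_
  filter_upwards [Ioo_mem_nhdsGT hs] with t ht
  exact hρ.map_smul_le_div_mul z ht.1.le ht.2.le

theorem sub_mem_modularSet (hρ : IsConvexModular ρ) {x y : X} (hy : y ∈ modularSet ρ)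
    (hx : x ∈ modularSet ρ) : y - x ∈ modularSet ρ := by
  have hfin := fun {z : X} (hz : z ∈ modularSet ρ) =>
    (hρ.tendsto_smul_nhdsGT_zero hz).eventually (gt_mem_nhds ENNReal.zero_lt_top)
  obtain ⟨t, ⟨hty, htx⟩, ht⟩ := ((hfin hy).and (hfin hx) |>.and self_mem_nhdsWithin).exists
  refine ⟨t / 2, half_pos ht, ?_⟩
  have h := hρ.convex (1 / 2) (by norm_num) (by norm_num) (t • y) (-(t • x))
  have hsplit : (1 / 2 : ℝ) • t • y + (1 - 1 / 2 : ℝ) • -(t • x) = (t / 2) • (y - x) := by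
    rw [smul_sub, smul_neg, ← sub_eq_add_neg, smul_smul, smul_smul]
    ring_nf
  rw [hsplit, hρ.neg_eq] at h
  exact h.trans_lt (ENNReal.add_lt_top.2 ⟨ENNReal.mul_lt_top ENNReal.ofReal_lt_top hty,
    ENNReal.mul_lt_top ENNReal.ofReal_lt_top htx⟩)

theorem map_add_le (hρ : IsConvexModular ρ) (v w : X) {l : ℝ} (hl₀ : 0 < l) (hl₁ : l < 1) :
    ρ (v + w) ≤
      ENNReal.ofReal l * ρ (l⁻¹ • v) + ENNReal.ofReal (1 - l) * ρ ((1 - l)⁻¹ • w) := by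
  have h := hρ.convex l hl₀.le hl₁.le (l⁻¹ • v) ((1 - l)⁻¹ • w)
  rwa [smul_inv_smul₀ hl₀.ne', smul_inv_smul₀ (sub_pos.2 hl₁).ne'] at h

theorem exists_lt_of_luxNorm_lt (hρ : IsConvexModular ρ) {z : X} (hz : z ∈ modularSet ρ)
    {δ : ℝ} (h : luxNorm ρ z < δ) : ∃ l : ℝ, 0 < l ∧ l < δ ∧ ρ (l⁻¹ • z) ≤ 1 := by
  obtain ⟨t, hρt, ht⟩ := ((hρ.tendsto_smul_nhdsGT_zero hz).eventually
    (gt_mem_nhds zero_lt_one) |>.and self_mem_nhdsWithin).exists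
  have hne : {l : ℝ | 0 < l ∧ ρ (l⁻¹ • z) ≤ 1}.Nonempty :=
    ⟨t⁻¹, inv_pos.2 ht, by rw [inv_inv]; exact hρt.le⟩
  obtain ⟨l, ⟨hl, hlz⟩, hlδ⟩ := exists_lt_of_csInf_lt hne h
  exact ⟨l, hl, hlδ, hlz⟩

theorem eventually_smul_mem_of_isTauRhoOpen (hρ : IsConvexModular ρ) {A : Set X}
    (hA : IsTauRhoOpen ρ A) {u : X} {l₀ : ℝ} (hl₀ : 0 < l₀) (hu : l₀ • u ∈ A) :
    ∀ᶠ l in 𝓝[>] l₀, l • u ∈ A := by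
  obtain ⟨ε, hε, hball⟩ := hA.2 _ hu
  have hum : u ∈ modularSet ρ := (smul_mem_modularSet_iff hl₀).1 (hA.1 hu)
  have hshift : Tendsto (fun l => l - l₀) (𝓝[>] l₀) (𝓝[>] 0) := by
    refine tendsto_nhdsWithin_of_tendsto_nhds_of_eventually_within _ ?_ ?_
    · simpa using ((continuous_sub_right l₀).tendsto l₀).mono_left nhdsWithin_le_nhds
    · filter_upwards [self_mem_nhdsWithin] with l hl using sub_pos.2 (Set.mem_Ioi.1 hl)
  filter_upwards [((hρ.tendsto_smul_nhdsGT_zero hum).comp hshift).eventually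
    (gt_mem_nhds (ENNReal.ofReal_pos.2 hε)), self_mem_nhdsWithin] with l hsmall hl
  exact hball ⟨(smul_mem_modularSet_iff (hl₀.trans hl)).2 hum, by rwa [← sub_smul]⟩

theorem isRightContinuousModular_of_isTauRhoOpen_modBall (hρ : IsConvexModular ρ)
    (h : ∀ r : ℝ, 0 < r → IsTauRhoOpen ρ (modBall ρ 0 r)) : IsRightContinuousModular ρ := by
  intro u l₀ hl₀
  refine tendsto_order.2 ⟨fun a ha => ?_, fun b hb => ?_⟩
  · filter_upwards [self_mem_nhdsWithin] with l hl
    exact ha.trans_le (hρ.monotoneOn_smul u (Set.mem_Ici.2 hl₀.le)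
      (Set.mem_Ici.2 (hl₀.trans hl).le) hl.le)
  · obtain ⟨c, -, hc, hcb⟩ := ENNReal.lt_iff_exists_real_btwn.1 hb
    have hmem : l₀ • u ∈ modBall ρ 0 c :=
      ⟨⟨1, one_pos, by simpa using hb.trans_le le_top⟩, by simpa using hc⟩
    filter_upwards [hρ.eventually_smul_mem_of_isTauRhoOpen
      (h c (ENNReal.ofReal_pos.1 ((zero_le).trans_lt hc))) hl₀ hmem] with l hl
    simpa using hl.2.trans hcb

theorem isLuxOpen_modBall (hρ : IsConvexModular ρ) (hrc : IsRightContinuousModular ρ)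
    (x₀ : X) (r : ℝ) : IsLuxOpen ρ (modBall ρ x₀ r) := by
  rintro x ⟨hx, hxr⟩
  obtain ⟨c, hc, hxc, hcr⟩ := ENNReal.lt_iff_exists_real_btwn.1 hxr
  obtain ⟨hcr, hr⟩ := ENNReal.ofReal_lt_ofReal_iff'.1 hcr
  obtain ⟨μ, hμc, hμ⟩ : ∃ μ : ℝ, ρ (μ • (x - x₀)) < ENNReal.ofReal c ∧ 1 < μ := by
    have h := hrc (x - x₀) 1 one_pos
    rw [one_smul] at h
    exact ((h.eventually_lt_const hxc).and self_mem_nhdsWithin).exists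
  refine ⟨min (1 - μ⁻¹) (r - c),
    lt_min (sub_pos.2 (inv_lt_one_of_one_lt₀ hμ)) (sub_pos.2 hcr), ?_⟩
  rintro y ⟨hy, hyx⟩
  obtain ⟨l, hl, hlδ, hl₁⟩ := hρ.exists_lt_of_luxNorm_lt (hρ.sub_mem_modularSet hy hx) hyx
  have hlμ : l < 1 - μ⁻¹ := hlδ.trans_le (min_le_left _ _)
  have hlc : l < r - c := hlδ.trans_le (min_le_right _ _)
  have hμ₀ : 0 < μ := one_pos.trans hμ
  have hl1 : 0 < 1 - l := by linarith [inv_pos.2 hμ₀]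
  have hscale : (1 - l)⁻¹ ≤ μ := (inv_le_comm₀ hl1 hμ₀).2 (by linarith)
  refine ⟨hy, ?_⟩
  calc ρ (y - x₀) = ρ ((y - x) + (x - x₀)) := by rw [sub_add_sub_cancel]
    _ ≤ ENNReal.ofReal l * ρ (l⁻¹ • (y - x)) +
          ENNReal.ofReal (1 - l) * ρ ((1 - l)⁻¹ • (x - x₀)) :=
        hρ.map_add_le _ _ hl (by linarith)
    _ ≤ ENNReal.ofReal l * 1 + 1 * ρ (μ • (x - x₀)) := by
        gcongr
        · exact ENNReal.ofReal_le_one.2 (by linarith)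
        · exact hρ.monotoneOn_smul _ (Set.mem_Ici.2 (inv_pos.2 hl1).le)
            (Set.mem_Ici.2 hμ₀.le) hscale
    _ < ENNReal.ofReal l + ENNReal.ofReal c := by
        rw [mul_one, one_mul]
        exact ENNReal.add_lt_add_left ENNReal.ofReal_ne_top hμc
    _ = ENNReal.ofReal (l + c) := (ENNReal.ofReal_add hl.le hc).symm
    _ < ENNReal.ofReal r := (ENNReal.ofReal_lt_ofReal_iff hr).2 (by linarith)

end IsConvexModular

namespace Delta2

variable {X : Type*} [AddCommGroup X] [Module ℝ X] {ρ : X → ℝ≥0∞}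

theorem tendsto_two_smul (hd : Delta2 ρ) :
    Tendsto (fun z : X => (2 : ℝ) • z) (comap ρ (𝓝 0)) (comap ρ (𝓝 0)) := by
  rw [tendsto_comap_iff, tendsto_iff_seq_tendsto]
  intro x hx
  exact hd x (tendsto_comap_iff.1 hx)

theorem tendsto_two_pow_smul (hd : Delta2 ρ) (k : ℕ) :
    Tendsto (fun z : X => (2 : ℝ) ^ k • z) (comap ρ (𝓝 0)) (comap ρ (𝓝 0)) := by
  induction k with
  | zero =>
    simp only [pow_zero, one_smul]
    exact tendsto_id
  | succ k ih => simpa [Function.comp_def, pow_succ', mul_smul] using hd.tendsto_two_smul.comp ih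

theorem isTauRhoOpen_of_isLuxOpen (hd : Delta2 ρ) {A : Set X} (hA : A ⊆ modularSet ρ)
    (hlux : IsLuxOpen ρ A) : IsTauRhoOpen ρ A := by
  refine ⟨hA, fun x hx => ?_⟩
  obtain ⟨δ, hδ, hball⟩ := hlux x hx
  obtain ⟨k, hk⟩ := pow_unbounded_of_one_lt δ⁻¹ (one_lt_two (α := ℝ))
  have hsmall : ∀ᶠ z in comap ρ (𝓝 0), ρ ((2 : ℝ) ^ k • z) ≤ 1 :=
    tendsto_comap_iff.1 (hd.tendsto_two_pow_smul k) (Iic_mem_nhds zero_lt_one)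
  obtain ⟨ε, hε, hsmall⟩ := eventually_comap_nhds_zero_iff.1 hsmall
  refine ⟨ε, hε, fun y ⟨hy, hyx⟩ => hball ⟨hy, ?_⟩⟩
  calc luxNorm ρ (y - x) ≤ ((2 : ℝ) ^ k)⁻¹ :=
        luxNorm_le (by positivity) (by rw [inv_inv]; exact hsmall _ hyx)
    _ < δ := (inv_lt_comm₀ (by positivity) hδ).2 hk

end Delta2

theorem modular_balls_open_right_continuity_general {X : Type*} [AddCommGroup X] [Module ℝ X]
    (ρ : X → ℝ≥0∞) (hρ : IsConvexModular ρ) :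
    ((∀ x₀ ∈ modularSet ρ, ∀ r : ℝ, 0 < r → IsTauRhoOpen ρ (modBall ρ x₀ r)) →
        IsRightContinuousModular ρ) ∧
    (IsRightContinuousModular ρ →
        ∀ x₀ ∈ modularSet ρ, ∀ r : ℝ, 0 < r → IsLuxOpen ρ (modBall ρ x₀ r)) ∧
    (Delta2 ρ →
      (∀ x₀ ∈ modularSet ρ, ∀ r : ℝ, 0 < r → IsLuxOpen ρ (modBall ρ x₀ r)) →
      (∀ x₀ ∈ modularSet ρ, ∀ r : ℝ, 0 < r → IsTauRhoOpen ρ (modBall ρ x₀ r))) :=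
  ⟨fun h => hρ.isRightContinuousModular_of_isTauRhoOpen_modBall fun r hr =>
      h 0 hρ.zero_mem_modularSet r hr,
    fun hrc x₀ _ r _ => hρ.isLuxOpen_modBall hrc x₀ r,
    fun hd h x₀ hx₀ r hr => hd.isTauRhoOpen_of_isLuxOpen (fun _ hy => hy.1) (h x₀ hx₀ r hr)⟩

/-- (1) if every open modular ball is `τ_ρ`-open then `ρ` is right-continuous;
(2) if `ρ` is right-continuous then every open modular ball is Luxemburg-norm open;
(3) if moreover `ρ` has the `Δ₂`-property, then Luxemburg-norm openness of all open
modular balls implies that they are all `τ_ρ`-open. -/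
theorem modular_balls_open_right_continuity {X : Type*} [AddCommGroup X] [Module ℝ X]
    (ρ : X → ℝ≥0∞) (hρ : IsConvexModular ρ) (hlc : IsLeftContinuousModular ρ) :
    ((∀ x₀ ∈ modularSet ρ, ∀ r : ℝ, 0 < r → IsTauRhoOpen ρ (modBall ρ x₀ r)) →
        IsRightContinuousModular ρ) ∧
    (IsRightContinuousModular ρ →
        ∀ x₀ ∈ modularSet ρ, ∀ r : ℝ, 0 < r → IsLuxOpen ρ (modBall ρ x₀ r)) ∧
    (Delta2 ρ →
      (∀ x₀ ∈ modularSet ρ, ∀ r : ℝ, 0 < r → IsLuxOpen ρ (modBall ρ x₀ r)) →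
      (∀ x₀ ∈ modularSet ρ, ∀ r : ℝ, 0 < r → IsTauRhoOpen ρ (modBall ρ x₀ r))) :=
  modular_balls_open_right_continuity_general ρ hρ
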